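/- For fixed t ≥ 0 and x ≥ 0 with x ≠ t, φ^A_{λ,t}(x) := E[((⌊λx⌋ − N_λ + 1)/λ) · 1{N_λ < λx}] → (x − t)·1{x > t} as λ → ∞, where N_λ ~ Poisson(tλ). -/

import Mathlib

/-!
The identity `k p_k = μ p_{k-1}` for the Poisson weights `p_k = e^{-μ} μ^k / k!` turns the
truncated first moment into `(⌊λx⌋ + 1)/λ · F(⌈λx⌉₊) - t · F(⌈λx⌉₊ - 1)`, where
`F(n) = P(N_λ < n)`. Chebyshev's inequality, with `Var N_λ = λt`, gives `F(n_λ) → 1{t < x}`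
whenever `n_λ / λ → x ≠ t`, and `(⌊λx⌋ + 1)/λ → x`.
-/

open Filter Real Finset Topology

section FloorCeil

variable {α : Type*} [Field α] [LinearOrder α] [IsStrictOrderedRing α] [FloorRing α]

lemma abs_natCeil_sub_le {y : α} (hy : 0 ≤ y) : |(⌈y⌉₊ : α) - y| ≤ 1 :=
  abs_le.mpr ⟨by linarith [Nat.le_ceil y], by linarith [Nat.ceil_lt_add_one hy]⟩

lemma abs_natCeil_sub_one_sub_le {y : α} (hy : 0 ≤ y) : |((⌈y⌉₊ - 1 : ℕ) : α) - y| ≤ 1 := by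
  have h1 : ((⌈y⌉₊ - 1 : ℕ) : α) ≤ ⌈y⌉₊ := by exact_mod_cast Nat.sub_le _ _
  have h2 : (⌈y⌉₊ : α) ≤ ((⌈y⌉₊ - 1 : ℕ) : α) + 1 := by norm_cast; omega
  exact abs_le.mpr ⟨by linarith [Nat.le_ceil y], by linarith [Nat.ceil_lt_add_one hy]⟩

lemma abs_floor_add_one_sub_le (y : α) : |((⌊y⌋ : α) + 1) - y| ≤ 1 :=
  abs_le.mpr ⟨by linarith [Int.lt_floor_add_one y], by linarith [Int.floor_le y]⟩

end FloorCeil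

lemma tsum_ite_lt_eq_sum_range {α M : Type*} [Semiring α] [LinearOrder α] [FloorSemiring α]
    [AddCommMonoid M] [TopologicalSpace M] (f : ℕ → M) (y : α) :
    ∑' k : ℕ, (if (k : α) < y then f k else 0) = ∑ k ∈ range ⌈y⌉₊, f k := by
  rw [tsum_eq_sum (s := range ⌈y⌉₊)]
  · exact sum_congr rfl fun k hk ↦ if_pos (Nat.lt_ceil.mp (mem_range.mp hk))
  · exact fun k hk ↦ if_neg (mt Nat.lt_ceil.mpr (by simpa using hk))

lemma hasSum_of_hasSum_succ {G : Type*} [AddCommGroup G] [TopologicalSpace G]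
    [IsTopologicalAddGroup G] {f : ℕ → G} {a : G} (h0 : f 0 = 0)
    (h : HasSum (fun k ↦ f (k + 1)) a) : HasSum f a :=
  (hasSum_nat_add_iff' 1).mp (by simpa [h0] using h)

lemma tendsto_div_self_of_abs_sub_mul_le {f : ℝ → ℝ} {x C : ℝ}
    (h : ∀ᶠ lam in atTop, |f lam - lam * x| ≤ C) :
    Tendsto (fun lam ↦ f lam / lam) atTop (𝓝 x) := by
  have hC : Tendsto (fun lam : ℝ ↦ C * lam⁻¹) atTop (𝓝 0) := by
    simpa using tendsto_inv_atTop_zero.const_mul C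
  rw [tendsto_iff_norm_sub_tendsto_zero]
  refine squeeze_zero' (.of_forall fun _ ↦ norm_nonneg _) ?_ hC
  filter_upwards [h, eventually_gt_atTop 0] with lam hf hlam
  rw [Real.norm_eq_abs, div_sub' hlam.ne', abs_div, abs_of_pos hlam, div_le_iff₀ hlam, mul_assoc,
    inv_mul_cancel₀ hlam.ne', mul_one]
  exact hf

noncomputable def poissonWeight (μ : ℝ) (k : ℕ) : ℝ := exp (-μ) * μ ^ k / k.factorial

lemma poissonWeight_nonneg {μ : ℝ} (hμ : 0 ≤ μ) (k : ℕ) : 0 ≤ poissonWeight μ k := by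
  unfold poissonWeight; positivity

lemma add_one_mul_poissonWeight_succ (μ : ℝ) (k : ℕ) :
    ((k : ℝ) + 1) * poissonWeight μ (k + 1) = μ * poissonWeight μ k := by
  simp only [poissonWeight, Nat.factorial_succ, pow_succ, Nat.cast_mul, Nat.cast_succ]
  field_simp

lemma hasSum_poissonWeight (μ : ℝ) : HasSum (poissonWeight μ) 1 := by
  have h := (NormedSpace.expSeries_div_hasSum_exp μ).mul_left (exp (-μ))
  rw [← exp_eq_exp_ℝ, ← exp_add, neg_add_cancel, exp_zero] at h
  exact h.congr_fun fun k ↦ mul_div_assoc ..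

lemma hasSum_natCast_mul_poissonWeight (μ : ℝ) :
    HasSum (fun k : ℕ ↦ (k : ℝ) * poissonWeight μ k) μ := by
  refine hasSum_of_hasSum_succ (by simp) ?_
  simp only [Nat.cast_succ, add_one_mul_poissonWeight_succ]
  simpa using (hasSum_poissonWeight μ).mul_left μ

lemma hasSum_natCast_sq_mul_poissonWeight (μ : ℝ) :
    HasSum (fun k : ℕ ↦ (k : ℝ) ^ 2 * poissonWeight μ k) (μ * (μ + 1)) := by
  refine hasSum_of_hasSum_succ (by simp) ?_
  have h k : ((k + 1 : ℕ) : ℝ) ^ 2 * poissonWeight μ (k + 1) =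
      μ * ((k : ℝ) * poissonWeight μ k + poissonWeight μ k) := by
    rw [sq, mul_assoc, Nat.cast_succ, add_one_mul_poissonWeight_succ]; ring
  simp only [h]
  exact ((hasSum_natCast_mul_poissonWeight μ).add (hasSum_poissonWeight μ)).mul_left μ

lemma hasSum_sq_sub_mul_poissonWeight (μ : ℝ) :
    HasSum (fun k : ℕ ↦ ((k : ℝ) - μ) ^ 2 * poissonWeight μ k) μ := by
  have h := ((hasSum_natCast_sq_mul_poissonWeight μ).sub
    ((hasSum_natCast_mul_poissonWeight μ).mul_left (2 * μ))).add
    ((hasSum_poissonWeight μ).mul_left (μ ^ 2))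
  rw [show μ * (μ + 1) - 2 * μ * μ + μ ^ 2 * 1 = μ by ring] at h
  exact h.congr_fun fun k ↦ by ring

lemma sum_range_natCast_mul_poissonWeight (μ : ℝ) (n : ℕ) :
    ∑ k ∈ range n, (k : ℝ) * poissonWeight μ k = μ * ∑ k ∈ range (n - 1), poissonWeight μ k := by
  cases n with
  | zero => simp
  | succ n => simp [sum_range_succ', add_one_mul_poissonWeight_succ, mul_sum]

lemma tsum_subtype_poissonWeight_le {μ d : ℝ} (hμ : 0 ≤ μ) (hd : 0 < d) (s : Set ℕ)
    (hs : ∀ k ∈ s, d ≤ |(k : ℝ) - μ|) :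
    ∑' k : s, poissonWeight μ k ≤ μ / d ^ 2 := by
  have hvar := (hasSum_sq_sub_mul_poissonWeight μ).div_const (d ^ 2)
  have hle (k : ℕ) (hk : k ∈ s) :
      poissonWeight μ k ≤ ((k : ℝ) - μ) ^ 2 * poissonWeight μ k / d ^ 2 := by
    have : d ^ 2 ≤ ((k : ℝ) - μ) ^ 2 := by
      simpa only [sq_abs] using pow_le_pow_left₀ hd.le (hs k hk) 2
    rw [le_div_iff₀ (by positivity), mul_comm]
    exact mul_le_mul_of_nonneg_right this (poissonWeight_nonneg hμ k)
  calc ∑' k : s, poissonWeight μ k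
      ≤ ∑' k : s, ((k : ℝ) - μ) ^ 2 * poissonWeight μ k / d ^ 2 :=
        Summable.tsum_le_tsum (fun k ↦ hle k k.2) ((hasSum_poissonWeight μ).summable.subtype s)
          (hvar.summable.subtype s)
    _ ≤ ∑' k : ℕ, ((k : ℝ) - μ) ^ 2 * poissonWeight μ k / d ^ 2 :=
        hvar.summable.tsum_subtype_le _ s fun k ↦ by have := poissonWeight_nonneg hμ k; positivity
    _ = μ / d ^ 2 := hvar.tsum_eq

lemma sum_range_sub_div_mul_poissonWeight (a b μ : ℝ) (n : ℕ) :
    ∑ k ∈ range n, (a - k) / b * poissonWeight μ k =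
      a / b * ∑ k ∈ range n, poissonWeight μ k -
        μ / b * ∑ k ∈ range (n - 1), poissonWeight μ k := by
  have h (k : ℕ) : (a - k) / b * poissonWeight μ k =
      a / b * poissonWeight μ k - b⁻¹ * ((k : ℝ) * poissonWeight μ k) := by ring
  rw [sum_congr rfl fun k _ ↦ h k, sum_sub_distrib, ← mul_sum, ← mul_sum,
    sum_range_natCast_mul_poissonWeight]
  ring

lemma tendsto_tsum_subtype_poissonWeight_zero {t ε : ℝ} (ht : 0 ≤ t) (hε : 0 < ε)
    {s : ℝ → Set ℕ}
    (hs : ∀ᶠ lam in atTop, ∀ k ∈ s lam, ε * lam ≤ |(k : ℝ) - lam * t|) :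
    Tendsto (fun lam ↦ ∑' k : s lam, poissonWeight (lam * t) k) atTop (𝓝 0) := by
  have hbound : Tendsto (fun lam : ℝ ↦ t / ε ^ 2 * lam⁻¹) atTop (𝓝 0) := by
    simpa using tendsto_inv_atTop_zero.const_mul (t / ε ^ 2)
  refine squeeze_zero' ?_ ?_ hbound
  · filter_upwards [eventually_ge_atTop 0] with lam hlam
    exact tsum_nonneg fun k ↦ poissonWeight_nonneg (mul_nonneg hlam ht) k
  · filter_upwards [hs, eventually_gt_atTop 0] with lam hlam hpos
    calc ∑' k : s lam, poissonWeight (lam * t) k ≤ lam * t / (ε * lam) ^ 2 :=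
          tsum_subtype_poissonWeight_le (by positivity) (by positivity) _ hlam
      _ = t / ε ^ 2 * lam⁻¹ := by field_simp

lemma sum_range_poissonWeight_eq_one_sub (μ : ℝ) (n : ℕ) :
    ∑ k ∈ range n, poissonWeight μ k =
      1 - ∑' k : ((range n : Set ℕ)ᶜ : Set ℕ), poissonWeight μ k := by
  have hsum := (hasSum_poissonWeight μ).summable
  rw [← (hasSum_poissonWeight μ).tsum_eq, ← Summable.tsum_add_tsum_compl (s := (range n : Set ℕ))
    (hsum.subtype _) (hsum.subtype _), Finset.tsum_subtype', add_sub_cancel_right]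

section Limits

variable {t x : ℝ} {c : ℝ → ℕ}

lemma tendsto_sum_range_poissonWeight_zero (ht : 0 ≤ t) (hxt : x < t)
    (hc : Tendsto (fun lam ↦ (c lam : ℝ) / lam) atTop (𝓝 x)) :
    Tendsto (fun lam ↦ ∑ k ∈ range (c lam), poissonWeight (lam * t) k) atTop (𝓝 0) := by
  simp_rw [← Finset.tsum_subtype]
  refine tendsto_tsum_subtype_poissonWeight_zero ht (ε := (t - x) / 2) (by linarith) ?_
  filter_upwards [hc.eventually (gt_mem_nhds (show x < (x + t) / 2 by linarith)),
    eventually_gt_atTop 0] with lam hc hlam k hk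
  rw [div_lt_iff₀ hlam] at hc
  have : (k : ℝ) < c lam := by exact_mod_cast mem_range.mp hk
  have := mul_pos (sub_pos.2 hxt) hlam
  rw [abs_sub_comm, abs_of_pos (by linarith)]
  linarith

lemma tendsto_sum_range_poissonWeight_one (ht : 0 ≤ t) (htx : t < x)
    (hc : Tendsto (fun lam ↦ (c lam : ℝ) / lam) atTop (𝓝 x)) :
    Tendsto (fun lam ↦ ∑ k ∈ range (c lam), poissonWeight (lam * t) k) atTop (𝓝 1) := by
  have htail : Tendsto (fun lam ↦ ∑' k : ((range (c lam) : Set ℕ)ᶜ : Set ℕ),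
      poissonWeight (lam * t) k) atTop (𝓝 0) := by
    refine tendsto_tsum_subtype_poissonWeight_zero ht (ε := (x - t) / 2) (by linarith) ?_
    filter_upwards [hc.eventually (lt_mem_nhds (show (x + t) / 2 < x by linarith)),
      eventually_gt_atTop 0] with lam hc hlam k hk
    rw [lt_div_iff₀ hlam] at hc
    have : (c lam : ℝ) ≤ k := by exact_mod_cast not_lt.mp (by simpa using hk)
    have := mul_pos (sub_pos.2 htx) hlam
    rw [abs_of_pos (by linarith)]
    linarith
  simpa only [sum_range_poissonWeight_eq_one_sub, sub_zero] using tendsto_const_nhds.sub htail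

lemma tendsto_sum_range_poissonWeight (ht : 0 ≤ t) (hxt : x ≠ t)
    (hc : Tendsto (fun lam ↦ (c lam : ℝ) / lam) atTop (𝓝 x)) :
    Tendsto (fun lam ↦ ∑ k ∈ range (c lam), poissonWeight (lam * t) k) atTop
      (𝓝 (if t < x then 1 else 0)) := by
  rcases hxt.lt_or_gt with hxt | htx
  · simpa only [if_neg hxt.not_gt] using tendsto_sum_range_poissonWeight_zero ht hxt hc
  · simpa only [if_pos htx] using tendsto_sum_range_poissonWeight_one ht htx hc

end Limits

/-- For `N_λ ~ Poisson(tλ)` and `x ≠ t`,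
`φ^A_{λ,t}(x) = E[((⌊λx⌋ − N_λ + 1)/λ)·1{N_λ < λx}] → (x − t)·1{x > t}` as `λ → ∞`. -/
theorem stmt_12 (t x : ℝ) (ht : 0 ≤ t) (hx : 0 ≤ x) (hxt : x ≠ t) :
    Filter.Tendsto
      (fun lam : ℝ =>
        ∑' k : ℕ, if (k : ℝ) < lam * x then
          (((⌊lam * x⌋ : ℝ) - (k : ℝ) + 1) / lam) *
            (Real.exp (-(lam * t)) * (lam * t) ^ k / (Nat.factorial k : ℝ)) else 0)
      Filter.atTop (nhds ((x - t) * (if t < x then (1 : ℝ) else 0))) := by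
  have hnonneg : ∀ᶠ lam : ℝ in atTop, 0 ≤ lam * x :=
    (eventually_ge_atTop 0).mono fun lam hlam ↦ mul_nonneg hlam hx
  have hceil := tendsto_div_self_of_abs_sub_mul_le (hnonneg.mono fun _ ↦ abs_natCeil_sub_le)
  have hpred :=
    tendsto_div_self_of_abs_sub_mul_le (hnonneg.mono fun _ ↦ abs_natCeil_sub_one_sub_le)
  have hfloor := tendsto_div_self_of_abs_sub_mul_le
    (.of_forall fun lam ↦ abs_floor_add_one_sub_le (lam * x))
  have hlim := (hfloor.mul (tendsto_sum_range_poissonWeight ht hxt hceil)).sub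
    ((tendsto_sum_range_poissonWeight ht hxt hpred).const_mul t)
  rw [← sub_mul] at hlim
  refine hlim.congr' ?_
  filter_upwards [eventually_gt_atTop 0] with lam hlam
  have hw (k : ℕ) : exp (-(lam * t)) * (lam * t) ^ k / (k.factorial : ℝ) =
      poissonWeight (lam * t) k := rfl
  simp only [hw, tsum_ite_lt_eq_sum_range, sub_add_eq_add_sub _ _ (1 : ℝ),
    sum_range_sub_div_mul_poissonWeight, mul_div_cancel_left₀ t hlam.ne']
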